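/- arXiv:1206.1277 — 2 statements merged into one kernel-verified Lean document; each statement's English description precedes it below -/
import Mathlib

section
/- If f : X → Y is a homotopy equivalence, then the top X̃ = q(X × {1}) of the mapping cylinder M_f is a strong deformation retract of M_f: there is a homotopy Γ : M_f × I → M_f with Γ(p,0) = p, Γ(p,1) ∈ X̃ for all p ∈ M_f, and Γ(p̃,s) = p̃ for all p̃ ∈ X̃ and all s ∈ I. -/
open unitInterval

/-- The relation generating the mapping cylinder identification `(x,0) ∼ f x`. -/
def cylRel {X Y : Type*} (f : X → Y) : (X × I) ⊕ Y → (X × I) ⊕ Y → Prop :=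
  fun a b => ∃ x : X, a = Sum.inl (x, 0) ∧ b = Sum.inr (f x)

/-- The mapping cylinder of `f`, as a quotient of `(X × I) ⊕ Y`. -/
abbrev Cyl {X Y : Type*} (f : X → Y) : Type _ := Quot (cylRel f)

/-- The quotient map onto the mapping cylinder. -/
def cylQ {X Y : Type*} (f : X → Y) : (X × I) ⊕ Y → Cyl f := Quot.mk _

/-!
Let `g` be a homotopy inverse of `f`, with `H : f g ≃ 1` and `K : g f ≃ 1`. First replace `K` by
the half-adjoint correction `K' = (g f K)⁻¹ · (g H f) · K`, for which the two homotopies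
`f K'` and `H f` from `f g f` to `f` are homotopic rel endpoints (naturality of `H` along the
loop `(f K)⁻¹ · H f`, then cancellation of a back-and-forth path). The retraction is `g` on `Y`
and `[x, t] ↦ K'(t, x)` on the cylinder.

To deform the identity into it rel the top, slide `Y` along `H⁻¹` and then up the cylinder over
`g`, dragging the bottom of each fibre `t ↦ [x, t]` along. Afterwards that fibre has become the
path `[g f x, 1] ⇝ f g f x ⇝ f x ⇝ [x, 1]` whose middle piece is `H (·, f x)`; replace this piece
by `f K'(·, x)`, and the naturality square of the cylinder along `K'` deforms the path rel
endpoints into the top path `[K'(·, x), 1]`.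
-/

instance : ContractibleSpace I :=
  (convex_Icc (0 : ℝ) 1).contractibleSpace ⟨0, unitInterval.zero_mem⟩

namespace ContinuousMap

variable {X Y Z : Type*} [TopologicalSpace X] [TopologicalSpace Y] [TopologicalSpace Z]
  {f₀ f₁ f₂ : C(X, Y)}

namespace Homotopy

def HomotopicRelEnds (F G : Homotopy f₀ f₁) : Prop :=
  HomotopicRel F.toContinuousMap G.toContinuousMap (Prod.fst ⁻¹' {0, 1})

theorem HomotopicRelEnds.refl (F : Homotopy f₀ f₁) : HomotopicRelEnds F F :=
  HomotopicRel.refl _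

theorem HomotopicRelEnds.trans {F G L : Homotopy f₀ f₁} (h₁ : HomotopicRelEnds F G)
    (h₂ : HomotopicRelEnds G L) : HomotopicRelEnds F L :=
  HomotopicRel.trans h₁ h₂

theorem HomotopicRelEnds.comp {F G : Homotopy f₀ f₁} (h : HomotopicRelEnds F G) (g : C(Y, Z)) :
    HomotopicRelEnds ((Homotopy.refl g).comp F) ((Homotopy.refl g).comp G) :=
  HomotopicRel.comp_continuousMap h g

def truncate (F : Homotopy f₀ f₁) (s : I) : Homotopy f₀ (F.curry s) where
  toFun p := F (p.1 * s, p.2)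
  map_zero_left x := by simp
  map_one_left x := by simp

@[simp] theorem truncate_apply (F : Homotopy f₀ f₁) (s : I) (p : I × X) :
    F.truncate s p = F (p.1 * s, p.2) :=
  rfl

section Families

variable {T : Type*} [TopologicalSpace T] {g₀ g₁ g₂ : T → C(X, Y)}

theorem continuous_trans_family (F : ∀ s, Homotopy (g₀ s) (g₁ s))
    (G : ∀ s, Homotopy (g₁ s) (g₂ s)) (hF : Continuous fun p : T × I × X => F p.1 p.2)
    (hG : Continuous fun p : T × I × X => G p.1 p.2) :
    Continuous fun p : T × I × X => (F p.1).trans (G p.1) p.2 := by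
  have extend {g₀ g₁ : T → C(X, Y)} {E : ∀ s, Homotopy (g₀ s) (g₁ s)}
      (hE : Continuous fun p : T × I × X => E p.1 p.2) {r : T × I × X → ℝ} (hr : Continuous r) :
      Continuous fun p : T × I × X => (E p.1).extend (r p) p.2.2 :=
    hE.comp (continuous_fst.prodMk ((continuous_projIcc.comp hr).prodMk (by fun_prop)))
  change Continuous fun p : T × I × X => if (p.2.1 : ℝ) ≤ 1 / 2 then
    (F p.1).extend (2 * p.2.1) p.2.2 else (G p.1).extend (2 * p.2.1 - 1) p.2.2
  refine continuous_if_le (by fun_prop) continuous_const (extend hF (by fun_prop)).continuousOn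
    (extend hG (by fun_prop)).continuousOn fun p hp => ?_
  norm_num [hp]

theorem continuous_symm_family (F : ∀ s, Homotopy (g₀ s) (g₁ s))
    (hF : Continuous fun p : T × I × X => F p.1 p.2) :
    Continuous fun p : T × I × X => (F p.1).symm p.2 := by
  change Continuous fun p : T × I × X => F p.1 (σ p.2.1, p.2.2)
  exact hF.comp (f := fun p : T × I × X => (p.1, σ p.2.1, p.2.2)) (by fun_prop)

end Families

theorem homotopicRelEnds_of_continuous {F G : Homotopy f₀ f₁} (Φ : I → Homotopy f₀ f₁)
    (hΦ : Continuous fun p : I × I × X => Φ p.1 p.2) (h₀ : Φ 0 = F) (h₁ : Φ 1 = G) :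
    HomotopicRelEnds F G := by
  subst h₀ h₁
  refine ⟨{ toFun := fun p => Φ p.1 p.2
            continuous_toFun := hΦ
            map_zero_left := fun _ => rfl
            map_one_left := fun _ => rfl
            prop' := ?_ }⟩
  rintro s ⟨t, x⟩ (ht | ht) <;> simp_all

end Homotopy

namespace HomotopyRel

variable {F G : Homotopy f₀ f₁}
  (Θ : HomotopyRel F.toContinuousMap G.toContinuousMap (Prod.fst ⁻¹' {0, 1}))

def homotopyAt (s : I) : Homotopy f₀ f₁ where
  toFun p := Θ (s, p)
  map_zero_left x := (Θ.eq_fst s (by simp)).trans (F.apply_zero x)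
  map_one_left x := (Θ.eq_fst s (by simp)).trans (F.apply_one x)

@[simp] theorem homotopyAt_apply (s : I) (p : I × X) : Θ.homotopyAt s p = Θ (s, p) :=
  rfl

@[simp] theorem homotopyAt_zero : Θ.homotopyAt 0 = F := by
  ext
  simp

@[simp] theorem homotopyAt_one : Θ.homotopyAt 1 = G := by
  ext
  simp

end HomotopyRel

namespace Homotopy

theorem HomotopicRelEnds.trans_congr {F F' : Homotopy f₀ f₁} {G G' : Homotopy f₁ f₂}
    (hF : HomotopicRelEnds F F') (hG : HomotopicRelEnds G G') :
    HomotopicRelEnds (F.trans G) (F'.trans G') := by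
  obtain ⟨Θ⟩ := hF
  obtain ⟨Ψ⟩ := hG
  refine homotopicRelEnds_of_continuous (fun s => (Θ.homotopyAt s).trans (Ψ.homotopyAt s))
    (continuous_trans_family _ _ Θ.continuous Ψ.continuous) ?_ ?_ <;>
  simp

/-- With `D = I × I`, which is simply connected, any two boundary paths of a square of homotopies
give homotopic families. -/
theorem homotopicRelEnds_of_path_homotopic {D : Type*} [TopologicalSpace D] {a b : D}
    {γ₀ γ₁ : Path a b} (hγ : γ₀.Homotopic γ₁) (φ : C(D × X, Y)) {F G : Homotopy f₀ f₁}
    (hF : ∀ p, F p = φ (γ₀ p.1, p.2)) (hG : ∀ p, G p = φ (γ₁ p.1, p.2)) :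
    HomotopicRelEnds F G := by
  obtain ⟨Γ⟩ := hγ
  refine homotopicRelEnds_of_continuous (fun s =>
    { toFun := fun p => φ (Γ (s, p.1), p.2)
      map_zero_left := fun x => by
        rw [Γ.source, ← γ₀.source]
        exact (hF (0, x)).symm.trans (F.apply_zero x)
      map_one_left := fun x => by
        rw [Γ.target, ← γ₀.target]
        exact (hF (1, x)).symm.trans (F.apply_one x) })
    (by change Continuous fun p : I × I × X => φ (Γ (p.1, p.2.1), p.2.2); fun_prop) ?_ ?_ <;>
  · ext p
    change φ (Γ (_, p.1), p.2) = _
    simp [hF, hG]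

theorem homotopicRelEnds_refl_trans (F : Homotopy f₀ f₁) :
    HomotopicRelEnds F ((Homotopy.refl f₀).trans F) :=
  homotopicRelEnds_of_path_homotopic (γ₀ := Path.id) (γ₁ := (Path.refl 0).trans Path.id)
    (SimplyConnectedSpace.paths_homotopic _ _) F.toContinuousMap (fun _ => rfl) fun p => by
      simp only [trans_apply, Path.trans_apply]
      split_ifs <;> simp

/- The next two lemmas read the naturality square `(τ, ρ) ↦ c (τ, p (ρ, x))` of `c` along `p`
along two different pairs of boundary paths. -/

theorem homotopicRelEnds_naturality {W : Type*} [TopologicalSpace W] {A B : C(W, Y)}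
    {α β : C(X, W)} (c : Homotopy A B) (p : Homotopy α β) :
    HomotopicRelEnds (((c.compContinuousMap α).symm.trans ((Homotopy.refl A).comp p)).trans
      (c.compContinuousMap β)) ((Homotopy.refl B).comp p) :=
  homotopicRelEnds_of_path_homotopic
    (γ₀ := ((Path.id.prod (.refl 0)).symm.trans ((Path.refl 0).prod .id)).trans
      (Path.id.prod (.refl 1)))
    (γ₁ := (Path.refl 1).prod .id) (SimplyConnectedSpace.paths_homotopic _ _)
    ⟨fun q => c (q.1.1, p (q.1.2, q.2)), by fun_prop⟩
    (fun q => by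
      simp only [trans_apply, Path.trans_apply]
      split_ifs <;> simp)
    fun q => by simp

theorem homotopicRelEnds_naturality' {W : Type*} [TopologicalSpace W] {A B : C(W, Y)}
    {α β : C(X, W)} (c : Homotopy A B) (p : Homotopy α β) :
    HomotopicRelEnds (c.compContinuousMap α) ((((Homotopy.refl A).comp p).trans
      (c.compContinuousMap β)).trans ((Homotopy.refl B).comp p).symm) :=
  homotopicRelEnds_of_path_homotopic (γ₀ := Path.id.prod (.refl 0))
    (γ₁ := (((Path.refl 0).prod .id).trans (Path.id.prod (.refl 1))).trans
      ((Path.refl 1).prod .id).symm)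
    (SimplyConnectedSpace.paths_homotopic _ _)
    ⟨fun q => c (q.1.1, p (q.1.2, q.2)), by fun_prop⟩
    (fun q => by simp)
    fun q => by
      simp only [trans_apply, Path.trans_apply]
      split_ifs <;> simp

theorem homotopicRelEnds_cancel {f₃ : C(X, Y)} (P : Homotopy f₀ f₁) (R : Homotopy f₁ f₂)
    (Q : Homotopy f₁ f₃) :
    HomotopicRelEnds ((P.trans R).trans (R.symm.trans Q))
      ((P.trans (.refl f₁)).trans ((Homotopy.refl f₁).trans Q)) := by
  -- shrink the back-and-forth path `R · R⁻¹` to the constant one through `R.truncate (σ s)`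
  have hR : Continuous fun p : I × I × X => R.truncate (σ p.1) p.2 := by
    change Continuous fun p : I × I × X => R (p.2.1 * σ p.1, p.2.2)
    fun_prop
  have hPR := continuous_trans_family (fun _ => P) (fun s => R.truncate (σ s))
    (P.continuous.comp continuous_snd) hR
  have hRQ := continuous_trans_family (fun s => (R.truncate (σ s)).symm) (fun _ => Q)
    (continuous_symm_family (fun s => R.truncate (σ s)) hR) (Q.continuous.comp continuous_snd)
  refine homotopicRelEnds_of_continuous
    (fun s => (P.trans (R.truncate (σ s))).trans ((R.truncate (σ s)).symm.trans Q))
    (continuous_trans_family (fun s => P.trans (R.truncate (σ s)))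
      (fun s => (R.truncate (σ s)).symm.trans Q) hPR hRQ) ?_ ?_ <;>
  · ext p
    simp [trans_apply]

/-- The half-adjoint refinement of a homotopy equivalence. -/
theorem exists_homotopicRelEnds_compContinuousMap (f : C(X, Y)) (g : C(Y, X))
    (H : Homotopy (f.comp g) (.id Y)) (K : Homotopy (g.comp f) (.id X)) :
    ∃ K' : Homotopy (g.comp f) (.id X),
      HomotopicRelEnds (H.compContinuousMap f) ((Homotopy.refl f).comp K') := by
  -- the casts only rewrite endpoints up to `comp_assoc`/`comp_id`, so that the pieces compose
  -- syntactically and `trans_apply` can fire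
  let fK : Homotopy ((f.comp g).comp f) f := ((Homotopy.refl f).comp K).cast rfl rfl
  let c : Homotopy f f := (fK.symm.trans (H.compContinuousMap f)).cast rfl rfl
  refine ⟨(((Homotopy.refl g).comp c).trans (.refl _)).trans ((Homotopy.refl _).trans K), ?_⟩
  have square := homotopicRelEnds_naturality' H c
  have c_symm : ((Homotopy.refl (.id Y)).comp c).symm = (H.compContinuousMap f).symm.trans fK := by
    change (fK.symm.trans (H.compContinuousMap f)).symm = _
    rw [symm_trans, symm_symm]
  rw [c_symm] at square
  refine square.trans ((homotopicRelEnds_cancel _ _ fK).trans ?_)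
  unfold HomotopicRelEnds
  convert HomotopicRel.refl _ using 1
  ext p
  simp only [coe_toContinuousMap, comp_apply, refl_apply, trans_apply, fK]
  split_ifs <;> rfl

end Homotopy

end ContinuousMap

namespace Cyl

open ContinuousMap ContinuousMap.Homotopy

variable {X Y Z W : Type*} [TopologicalSpace X] [TopologicalSpace Y] [TopologicalSpace Z]
  [TopologicalSpace W] (f : C(X, Y))

def base : C(Y, Cyl f) := ⟨fun y => cylQ f (.inr y), continuous_quot_mk.comp continuous_inr⟩

def top : C(X, Cyl f) := ⟨fun x => cylQ f (.inl (x, 1)), continuous_quot_mk.comp <|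
  continuous_inl.comp (continuous_id.prodMk continuous_const)⟩

def cylinder : Homotopy ((base f).comp f) (top f) where
  toFun p := cylQ f (.inl (p.2, p.1))
  continuous_toFun := continuous_quot_mk.comp <| continuous_inl.comp continuous_swap
  map_zero_left x := Quot.sound ⟨x, rfl, rfl⟩
  map_one_left _ := rfl

variable {f}

@[elab_as_elim]
theorem ind {P : Cyl f → Prop} (base : ∀ y, P (base f y)) (cylinder : ∀ p, P (cylinder f p))
    (q : Cyl f) : P q := by
  induction q using Quot.ind with
  | mk a => rcases a with ⟨x, t⟩ | y; exacts [cylinder (t, x), base y]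

def desc (v : C(Y, Z)) {w : C(X, Z)} (u : Homotopy (v.comp f) w) : C(Cyl f, Z) where
  toFun := Quot.lift (Sum.elim (fun p => u (p.2, p.1)) v) <| by
    rintro _ _ ⟨x, rfl, rfl⟩
    exact u.apply_zero x
  continuous_toFun := continuous_quot_lift _ <|
    (u.continuous.comp continuous_swap).sumElim v.continuous

variable {v : C(Y, Z)} {w : C(X, Z)}

@[simp] theorem desc_base (u : Homotopy (v.comp f) w) (y : Y) : desc v u (base f y) = v y :=
  rfl

@[simp] theorem desc_cylinder (u : Homotopy (v.comp f) w) (p : I × X) :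
    desc v u (cylinder f p) = u p :=
  rfl

@[simp] theorem desc_top (u : Homotopy (v.comp f) w) (x : X) : desc v u (top f x) = w x :=
  u.apply_one x

theorem desc_base_cylinder : desc (base f) (cylinder f) = ContinuousMap.id (Cyl f) := by
  ext q
  induction q using ind <;> rfl

theorem comp_desc (h : C(Z, W)) (u : Homotopy (v.comp f) w) :
    h.comp (desc v u) = desc (h.comp v) ((ContinuousMap.Homotopy.refl h).comp u) := by
  ext q
  induction q using ind <;> rfl

theorem continuous_desc_family {T : Type*} [TopologicalSpace T] [LocallyCompactSpace T]
    {v : T → C(Y, Z)} {w : T → C(X, Z)} {u : ∀ s, Homotopy ((v s).comp f) (w s)}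
    (hv : Continuous fun p : T × Y => v p.1 p.2) (hu : Continuous fun p : T × I × X => u p.1 p.2) :
    Continuous fun p : T × Cyl f => desc (v p.1) (u p.1) p.2 := by
  refine isQuotientMap_quot_mk.continuous_lift_prod_right ?_
  refine ((Homeomorph.prodSumDistrib (X := T) (Y := X × I) (Z := Y)).symm.comp_continuous_iff'
    (Z := Z)).1 ?_
  refine continuous_sum_dom.2 ⟨?_, hv⟩
  exact hu.comp (f := fun p : T × X × I => (p.1, p.2.2, p.2.1)) (by fun_prop)

theorem homotopicRel_desc_family (v : I → C(Y, Z)) (u : ∀ s, Homotopy ((v s).comp f) w)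
    (hv : Continuous fun p : I × Y => v p.1 p.2) (hu : Continuous fun p : I × I × X => u p.1 p.2) :
    HomotopicRel (desc (v 0) (u 0)) (desc (v 1) (u 1)) (Set.range (top f)) := by
  refine ⟨{ toFun := fun p => desc (v p.1) (u p.1) p.2
            continuous_toFun := continuous_desc_family hv hu
            map_zero_left := fun _ => rfl
            map_one_left := fun _ => rfl
            prop' := ?_ }⟩
  rintro s _ ⟨x, rfl⟩
  exact (desc_top _ x).trans (desc_top _ x).symm

theorem homotopicRel_desc {u u' : Homotopy (v.comp f) w} (h : HomotopicRelEnds u u') :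
    HomotopicRel (desc v u) (desc v u') (Set.range (top f)) := by
  obtain ⟨Θ⟩ := h
  simpa using homotopicRel_desc_family (fun _ => v) Θ.homotopyAt
    (v.continuous.comp continuous_snd) Θ.continuous

/-- Homotopy extension along `Y`, rel the top: the bottom of each fibre is dragged along the
initial segments `G.symm.truncate s` of the reversed paths of `G`. -/
theorem homotopicRel_desc_trans {v' : C(Y, Z)} (G : Homotopy v' v)
    (u : Homotopy (v.comp f) w) :
    HomotopicRel (desc v u) (desc v' ((G.compContinuousMap f).trans u)) (Set.range (top f)) := by
  refine (homotopicRel_desc (homotopicRelEnds_refl_trans u)).trans ?_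
  have hG : Continuous fun p : I × I × X => (G.symm.truncate p.1).compContinuousMap f p.2 := by
    change Continuous fun p : I × I × X => G (σ (p.2.1 * p.1), f p.2.2)
    fun_prop
  have hv : Continuous fun p : I × Y => G.symm.curry p.1 p.2 := G.symm.continuous
  have hu := continuous_trans_family (fun s => ((G.symm.truncate s).compContinuousMap f).symm)
    (fun _ => u) (continuous_symm_family (fun s => (G.symm.truncate s).compContinuousMap f) hG)
    (u.continuous.comp continuous_snd)
  convert homotopicRel_desc_family (fun s => G.symm.curry s)
    (fun s => ((G.symm.truncate s).compContinuousMap f).symm.trans u) hv hu using 1 <;>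
  · ext q
    induction q using ind <;> simp [trans_apply]

variable (f) in
theorem exists_homotopicRel_id_top_comp (g : C(Y, X)) (H : Homotopy (f.comp g) (.id Y))
    (K : Homotopy (g.comp f) (.id X)) :
    ∃ r : C(Cyl f, X),
      HomotopicRel (ContinuousMap.id (Cyl f)) ((top f).comp r) (Set.range (top f)) := by
  obtain ⟨K', hK'⟩ := exists_homotopicRelEnds_compContinuousMap f g H K
  refine ⟨desc g K', ?_⟩
  let G : Homotopy ((top f).comp g) (base f) :=
    ((cylinder f).compContinuousMap g).symm.trans ((ContinuousMap.Homotopy.refl (base f)).comp H)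
  rw [← desc_base_cylinder, comp_desc]
  refine (homotopicRel_desc_trans G (cylinder f)).trans (homotopicRel_desc ?_)
  change HomotopicRelEnds ((((cylinder f).compContinuousMap (g.comp f)).symm.trans
    ((ContinuousMap.Homotopy.refl (base f)).comp (H.compContinuousMap f))).trans (cylinder f)) _
  exact (((HomotopicRelEnds.refl _).trans_congr (hK'.comp (base f))).trans_congr
    (.refl _)).trans (homotopicRelEnds_naturality (cylinder f) K')

end Cyl

/-- if `f` is a homotopy equivalence, the top `X̃ = q(X × {1})`
of the mapping cylinder is a *strong* deformation retract of `M_f`. -/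
theorem top_strong_deformation_retract {X Y : Type*} [TopologicalSpace X] [TopologicalSpace Y]
    (f : X → Y) (hf : Continuous f)
    (hfe : ∃ g : C(Y, X), ((⟨f, hf⟩ : C(X, Y)).comp g).Homotopic (ContinuousMap.id Y) ∧
      (g.comp ⟨f, hf⟩).Homotopic (ContinuousMap.id X)) :
    ∃ Γ : C(Cyl f × I, Cyl f),
      (∀ p : Cyl f, Γ (p, 0) = p) ∧
      (∀ p : Cyl f, Γ (p, 1) ∈ Set.range fun x : X => cylQ f (Sum.inl (x, 1))) ∧
      (∀ p ∈ Set.range fun x : X => cylQ f (Sum.inl (x, 1)), ∀ s : I, Γ (p, s) = p) := by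
  obtain ⟨g, ⟨H⟩, ⟨K⟩⟩ := hfe
  obtain ⟨r, ⟨Γ⟩⟩ := Cyl.exists_homotopicRel_id_top_comp ⟨f, hf⟩ g H K
  exact ⟨Γ.toContinuousMap.comp .prodSwap, Γ.apply_zero, fun p => ⟨r p, (Γ.apply_one p).symm⟩,
    fun p hp s => Γ.eq_fst s hp⟩
end

section
/- If the top X̃ = q(X × {1}) of the mapping cylinder M_f of a continuous map f : X → Y is a strong deformation retract of M_f, then f is a homotopy equivalence. -/
open unitInterval

/-! The top inclusion `j : X → M_f` is an embedding, so the end `H(·, 1)` of the deformation factors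
as `j ∘ r` with `r : M_f → X` continuous and `r ∘ j = id`, and `H` itself is a homotopy
`id ≃ j ∘ r`. Put `g = r ∘ i` with `i : Y → M_f` the base inclusion. The projection
`π : M_f → Y` satisfies `π ∘ j = f` and `π ∘ i = id`, so `f ∘ g = π ∘ (j ∘ r) ∘ i ≃ π ∘ i = id`;
sliding down the cylinder gives `i ∘ f ≃ j`, so `g ∘ f = r ∘ i ∘ f ≃ r ∘ j = id`. -/

open Topology Set

section MappingCylinder

variable {X Y : Type*}

noncomputable def cylCollapse (f : X → Y) : Cyl f → Option (X × I) :=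
  Quot.lift (Sum.elim (fun p => if p.2 = 0 then none else some p) fun _ => none)
    (by rintro _ _ ⟨x, rfl, rfl⟩; simp)

lemma cylQ_eq_cylQ_inl_iff {f : X → Y} {p : X × I} (hp : p.2 ≠ 0) {a : (X × I) ⊕ Y} :
    cylQ f a = cylQ f (.inl p) ↔ a = .inl p := by
  refine ⟨fun h => ?_, fun h => h ▸ rfl⟩
  have hcollapse := congrArg (cylCollapse f) h
  rcases a with q | y
  · by_cases hq : q.2 = 0
    · simp [cylCollapse, cylQ, hp, hq] at hcollapse
    · simp only [cylCollapse, cylQ, Sum.elim_inl, hp, hq] at hcollapse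
      simpa using hcollapse
  · simp [cylCollapse, cylQ, hp] at hcollapse

lemma cylQ_inl_zero (f : X → Y) (x : X) : cylQ f (.inl (x, 0)) = cylQ f (.inr (f x)) :=
  Quot.sound ⟨x, rfl, rfl⟩

lemma preimage_cylQ_image_inl (f : X → Y) {W : Set (X × I)} (hW : ∀ p ∈ W, p.2 ≠ 0) :
    cylQ f ⁻¹' (cylQ f '' (Sum.inl '' W)) = Sum.inl '' W := by
  ext a
  simp only [mem_preimage, mem_image, exists_exists_and_eq_and]
  exact ⟨fun ⟨p, hpW, hp⟩ => ⟨p, hpW, ((cylQ_eq_cylQ_inl_iff (hW p hpW)).mp hp.symm).symm⟩,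
    fun ⟨p, hpW, hp⟩ => ⟨p, hpW, hp ▸ rfl⟩⟩

variable [TopologicalSpace X] [TopologicalSpace Y]

lemma isOpen_cylQ_image_inl (f : X → Y) {W : Set (X × I)} (hW : IsOpen W)
    (hW0 : ∀ p ∈ W, p.2 ≠ 0) : IsOpen (cylQ f '' (Sum.inl '' W)) := by
  rw [← isQuotientMap_quot_mk.isOpen_preimage]
  change IsOpen (cylQ f ⁻¹' _)
  rw [preimage_cylQ_image_inl f hW0]
  exact isOpenMap_inl W hW

def cylTop (f : X → Y) : C(X, Cyl f) :=
  ⟨fun x => cylQ f (.inl (x, 1)), continuous_quot_mk.comp (continuous_inl.comp (.prodMk_left 1))⟩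

def cylBase (f : X → Y) : C(Y, Cyl f) :=
  ⟨fun y => cylQ f (.inr y), continuous_quot_mk.comp continuous_inr⟩

def cylProj (f : C(X, Y)) : C(Cyl f, Y) where
  toFun := Quot.lift (Sum.elim (fun p => f p.1) id) (by rintro _ _ ⟨x, rfl, rfl⟩; rfl)
  continuous_toFun :=
    continuous_quot_lift _ ((f.continuous.comp continuous_fst).sumElim continuous_id)

lemma isEmbedding_cylTop (f : X → Y) : IsEmbedding (cylTop f) := by
  have hinj : Function.Injective (cylTop f) := fun x x' h => by
    simpa using (cylQ_eq_cylQ_inl_iff (p := (x', 1)) one_ne_zero).mp h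
  refine ⟨⟨le_antisymm (continuous_iff_le_induced.mp (cylTop f).continuous) fun U hU => ?_⟩, hinj⟩
  rw [isOpen_induced_iff]
  have hW0 : ∀ p ∈ U ×ˢ ({0}ᶜ : Set I), p.2 ≠ 0 := fun p hp => hp.2
  refine ⟨_, isOpen_cylQ_image_inl f (hU.prod isOpen_compl_singleton) hW0, ?_⟩
  ext x
  change Sum.inl (x, 1) ∈ cylQ f ⁻¹' _ ↔ _
  rw [preimage_cylQ_image_inl f hW0]
  simp

lemma cylBase_comp_homotopic_cylTop (f : C(X, Y)) :
    ((cylBase f).comp f).Homotopic (cylTop f) :=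
  ⟨{ toFun := fun q => cylQ f (.inl (q.2, q.1))
     continuous_toFun := continuous_quot_mk.comp (continuous_inl.comp continuous_swap)
     map_zero_left := cylQ_inl_zero f
     map_one_left := fun _ => rfl }⟩

lemma Topology.IsEmbedding.exists_continuousMap_comp_eq {Z W : Type*} [TopologicalSpace Z]
    [TopologicalSpace W] {j : C(X, Z)} (hj : IsEmbedding j) (g : C(W, Z))
    (hg : ∀ w, g w ∈ range j) : ∃ r : C(W, X), j.comp r = g := by
  choose r hr using hg
  have hjr : j ∘ r = g := funext hr
  exact ⟨⟨r, hj.continuous_iff.mpr (hjr ▸ g.continuous)⟩, ContinuousMap.ext hr⟩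

theorem exists_homotopy_inverse_of_cylTop_retract (f : C(X, Y)) (r : C(Cyl f, X))
    (hrj : r.comp (cylTop f) = .id X) (hjr : ((cylTop f).comp r).Homotopic (.id (Cyl f))) :
    ∃ g : C(Y, X), (f.comp g).Homotopic (.id Y) ∧ (g.comp f).Homotopic (.id X) := by
  refine ⟨r.comp (cylBase f), ?_, ?_⟩
  · exact (ContinuousMap.Homotopic.refl (cylProj f)).comp (hjr.comp (.refl (cylBase f)))
  · rw [← hrj]
    exact (ContinuousMap.Homotopic.refl r).comp (cylBase_comp_homotopic_cylTop f)

end MappingCylinder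

/-- if the top `X̃ = q(X × {1})` of the mapping cylinder of a
continuous map `f` is a strong deformation retract of `M_f`, then `f` is a
homotopy equivalence. -/
theorem homotopy_equivalence_of_top_sdr {X Y : Type*} [TopologicalSpace X] [TopologicalSpace Y]
    (f : X → Y) (hf : Continuous f)
    (hsdr : ∃ H : C(Cyl f × I, Cyl f),
      (∀ p : Cyl f, H (p, 0) = p) ∧
      (∀ p : Cyl f, H (p, 1) ∈ Set.range fun x : X => cylQ f (Sum.inl (x, 1))) ∧
      (∀ p ∈ Set.range fun x : X => cylQ f (Sum.inl (x, 1)), ∀ s : I, H (p, s) = p)) :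
    ∃ g : C(Y, X), ((⟨f, hf⟩ : C(X, Y)).comp g).Homotopic (ContinuousMap.id Y) ∧
      (g.comp ⟨f, hf⟩).Homotopic (ContinuousMap.id X) := by
  obtain ⟨H, H_zero, H_one, H_top⟩ := hsdr
  have hj := isEmbedding_cylTop f
  obtain ⟨r, hr⟩ := hj.exists_continuousMap_comp_eq (H.comp (.prodMk (.id _) (.const _ 1))) H_one
  have hrj : r.comp (cylTop f) = .id X := by
    ext x
    apply hj.injective
    exact (DFunLike.congr_fun hr (cylTop f x)).trans (H_top _ ⟨x, rfl⟩ 1)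
  have hjr : ((cylTop f).comp r).Homotopic (.id (Cyl f)) :=
    .symm ⟨{ toContinuousMap := H.comp .prodSwap
             map_zero_left := H_zero
             map_one_left := fun p => (DFunLike.congr_fun hr p).symm }⟩
  exact exists_homotopy_inverse_of_cylTop_retract ⟨f, hf⟩ r hrj hjr
end
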